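/- arXiv:2004.06586 — 11 statements merged into one kernel-verified Lean document; each statement's English description precedes it below -/
import Mathlib

section
/- Let d, e ∈ ℝ. There exist real numbers x₁, x₂, x₃ satisfying x₁ + x₂ + x₃ = 0, x₁² + x₂² + x₃² = d, and x₁³ + x₂³ + x₃³ = e if and only if d³ ≥ 6e². -/
/-!
For a centred triple the quantity `d³ - 6e²` is twice the discriminant `((x₁ - x₂)(x₂ - x₃)(x₃ - x₁))²`,
which gives necessity. Conversely, once `x₃ = t` is fixed the other two coordinates are forced to be
`(-t ± √(2d - 3t²)) / 2`, and then the sum of cubes is the odd cubic `3t³ - (3/2)dt`. On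
`|t| ≤ √(2d/3)` this cubic takes the values `±√(d³/6)`, so by the intermediate value theorem it
hits every `e` with `6e² ≤ d³`.
-/

theorem sum_sq_pow_three_sub_six_mul_sum_pow_three_sq {x₁ x₂ x₃ : ℝ} (h : x₁ + x₂ + x₃ = 0) :
    (x₁ ^ 2 + x₂ ^ 2 + x₃ ^ 2) ^ 3 - 6 * (x₁ ^ 3 + x₂ ^ 3 + x₃ ^ 3) ^ 2 =
      2 * ((x₁ - x₂) * (x₂ - x₃) * (x₃ - x₁)) ^ 2 := by
  obtain rfl : x₃ = -x₁ - x₂ := by linarith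
  ring

theorem exists_centred_triple_of_cubic_eq {d e t : ℝ} (ht : 3 * t ^ 2 ≤ 2 * d)
    (he : 3 * t ^ 3 - 3 / 2 * d * t = e) :
    ∃ x₁ x₂ x₃ : ℝ, x₁ + x₂ + x₃ = 0 ∧ x₁ ^ 2 + x₂ ^ 2 + x₃ ^ 2 = d ∧
      x₁ ^ 3 + x₂ ^ 3 + x₃ ^ 3 = e := by
  set s := √(2 * d - 3 * t ^ 2)
  have hs : s ^ 2 = 2 * d - 3 * t ^ 2 := Real.sq_sqrt (by linarith)
  refine ⟨(-t + s) / 2, (-t - s) / 2, t, by ring, by linear_combination hs / 2, ?_⟩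
  linear_combination he - 3 * t / 4 * hs

theorem exists_cubic_eq_of_six_mul_sq_le {d e : ℝ} (hd : 0 ≤ d) (h : 6 * e ^ 2 ≤ d ^ 3) :
    ∃ t, 3 * t ^ 2 ≤ 2 * d ∧ 3 * t ^ 3 - 3 / 2 * d * t = e := by
  set f : ℝ → ℝ := fun t ↦ 3 * t ^ 3 - 3 / 2 * d * t
  set r := √(2 * d / 3)
  have hr : r ^ 2 = 2 * d / 3 := Real.sq_sqrt (by positivity)
  have hr₀ : 0 ≤ r := Real.sqrt_nonneg _
  have hfr : f r = r * d / 2 := by simp only [f]; linear_combination 3 * r * hr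
  have hfr' : f (-r) = -(r * d / 2) := by simp only [f]; linear_combination -3 * r * hr
  have he : -(r * d / 2) ≤ e ∧ e ≤ r * d / 2 :=
    abs_le_of_sq_le_sq' (by linear_combination h / 6 - d ^ 2 / 4 * hr) (by positivity)
  obtain ⟨t, ⟨hrt, htr⟩, hft⟩ :=
    intermediate_value_Icc (by linarith) (by fun_prop : Continuous f).continuousOn
      (show e ∈ Set.Icc (f (-r)) (f r) by rw [hfr, hfr']; exact he)
  exact ⟨t, by linarith [sq_le_sq' hrt htr], hft⟩

theorem stmt_0 (d e : ℝ) :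
    (∃ x₁ x₂ x₃ : ℝ, x₁ + x₂ + x₃ = 0 ∧ x₁ ^ 2 + x₂ ^ 2 + x₃ ^ 2 = d ∧
      x₁ ^ 3 + x₂ ^ 3 + x₃ ^ 3 = e) ↔ d ^ 3 ≥ 6 * e ^ 2 := by
  constructor
  · rintro ⟨x₁, x₂, x₃, hsum, rfl, rfl⟩
    linarith [sum_sq_pow_three_sub_six_mul_sum_pow_three_sq hsum,
      sq_nonneg ((x₁ - x₂) * (x₂ - x₃) * (x₃ - x₁))]
  · intro h
    have hd : 0 ≤ d := (Odd.pow_nonneg_iff (by decide)).mp ((by positivity : 0 ≤ 6 * e ^ 2).trans h)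
    obtain ⟨t, ht, he⟩ := exists_cubic_eq_of_six_mul_sq_le hd h
    exact exists_centred_triple_of_cubic_eq ht he
end

section
/- Let a, b, c ∈ ℝ. There exist real numbers s₁, s₂, s₃ satisfying s₁ + s₂ + s₃ = a, s₁² + s₂² + s₃² = b, and s₁³ + s₂³ + s₃³ = c if and only if (b − a²/3)³ ≥ 6·(c − ab + (2/9)a³)². -/
/-!
Shifting by `a / 3` reduces to three numbers with zero sum, prescribed sum of squares `p` and
sum of cubes `q`. For such numbers `p³ - 6q²` is twice the squared Vandermonde product, which
gives necessity. Conversely, when `6q² ≤ p³` the numbers are the three real roots of the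
depressed cubic, written down by Viète's trigonometric formula
`xₖ = m cos (θ + 2πk/3)` with `m = √(2p/3)` and `cos 3θ = 4q / (3m³)`.
-/

open Real

theorem power_sums_discriminant (s₁ s₂ s₃ : ℝ) :
    let a := s₁ + s₂ + s₃
    let b := s₁ ^ 2 + s₂ ^ 2 + s₃ ^ 2
    let c := s₁ ^ 3 + s₂ ^ 3 + s₃ ^ 3
    (b - a ^ 2 / 3) ^ 3 - 6 * (c - a * b + (2 / 9) * a ^ 3) ^ 2 =
      2 * ((s₁ - s₂) * (s₂ - s₃) * (s₃ - s₁)) ^ 2 := by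
  intros
  ring

/-- The points `m (u, -u/2 + (√3/2) v, -u/2 - (√3/2) v)` are `m cos (θ + 2πk/3)` for
`(u, v) = (cos θ, sin θ)`. -/
theorem power_sums_of_sq_add_sq_eq_one (m u v : ℝ) (huv : u ^ 2 + v ^ 2 = 1) :
    let x₁ := m * u
    let x₂ := m * (-u / 2 + √3 / 2 * v)
    let x₃ := m * (-u / 2 - √3 / 2 * v)
    x₁ + x₂ + x₃ = 0 ∧ x₁ ^ 2 + x₂ ^ 2 + x₃ ^ 2 = 3 / 2 * m ^ 2 ∧
      x₁ ^ 3 + x₂ ^ 3 + x₃ ^ 3 = 3 / 4 * m ^ 3 * (4 * u ^ 3 - 3 * u) := by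
  have h3 : √3 ^ 2 = 3 := sq_sqrt (by norm_num)
  refine ⟨by ring, ?_, ?_⟩
  · linear_combination (m ^ 2 * v ^ 2 / 2) * h3 + (3 * m ^ 2 / 2) * huv
  · linear_combination (-(3 * m ^ 3 * u * v ^ 2 / 4)) * h3 - (9 / 4 * m ^ 3 * u) * huv

theorem exists_sum_eq_zero_power_sums {p q : ℝ} (h : 6 * q ^ 2 ≤ p ^ 3) :
    ∃ x₁ x₂ x₃ : ℝ, x₁ + x₂ + x₃ = 0 ∧ x₁ ^ 2 + x₂ ^ 2 + x₃ ^ 2 = p ∧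
      x₁ ^ 3 + x₂ ^ 3 + x₃ ^ 3 = q := by
  have hp : 0 ≤ p := by
    by_contra! hp
    nlinarith [sq_nonneg q, pow_pos (neg_pos.mpr hp) 3]
  set m := √(2 * p / 3)
  have hm : m ^ 2 = 2 * p / 3 := sq_sqrt (by positivity)
  have hqm : |4 * q| ≤ |3 * m ^ 3| := by
    rw [← sq_le_sq, show (3 * m ^ 3) ^ 2 = 9 * (m ^ 2) ^ 3 by ring, hm]
    nlinarith
  set t := 4 * q / (3 * m ^ 3)
  have ht : -1 ≤ t ∧ t ≤ 1 :=
    abs_le.mp (by rw [abs_div]; exact div_le_one_of_le₀ hqm (abs_nonneg _))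
  have hq : 3 / 4 * m ^ 3 * t = q := by
    rcases eq_or_ne m 0 with hm0 | hm0
    · have hq0 : q = 0 := abs_nonpos_iff.mp (by simp [hm0] at hqm; linarith)
      simp [hm0, hq0]
    · simp only [t]
      field_simp
  set θ := arccos t / 3
  have hcos : 4 * cos θ ^ 3 - 3 * cos θ = t := by
    rw [← cos_three_mul, mul_div_cancel₀ _ three_ne_zero, cos_arccos ht.1 ht.2]
  obtain ⟨h₁, h₂, h₃⟩ := power_sums_of_sq_add_sq_eq_one m (cos θ) (sin θ) (cos_sq_add_sin_sq θ)
  exact ⟨_, _, _, h₁, by rw [h₂, hm]; ring, by rw [h₃, hcos, hq]⟩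

theorem stmt_1 (a b c : ℝ) :
    (∃ s₁ s₂ s₃ : ℝ, s₁ + s₂ + s₃ = a ∧ s₁ ^ 2 + s₂ ^ 2 + s₃ ^ 2 = b ∧
      s₁ ^ 3 + s₂ ^ 3 + s₃ ^ 3 = c) ↔
    (b - a ^ 2 / 3) ^ 3 ≥ 6 * (c - a * b + (2 / 9) * a ^ 3) ^ 2 := by
  constructor
  · rintro ⟨s₁, s₂, s₃, rfl, rfl, rfl⟩
    have hdisc := power_sums_discriminant s₁ s₂ s₃
    linarith [sq_nonneg ((s₁ - s₂) * (s₂ - s₃) * (s₃ - s₁))]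
  · intro h
    obtain ⟨x₁, x₂, x₃, h₁, h₂, h₃⟩ := exists_sum_eq_zero_power_sums h
    refine ⟨x₁ + a / 3, x₂ + a / 3, x₃ + a / 3, by linear_combination h₁, ?_, ?_⟩
    · linear_combination h₂ + (2 * a / 3) * h₁
    · linear_combination h₃ + a * h₂ + (a ^ 2 / 3) * h₁
end

section
/- Let m > 0 and p₁ be real numbers. There exist real numbers s₁, s₂, s₃ satisfying s₁ + s₂ + s₃ = 0, s₁² + s₂² + s₃² = m, and s₁³ + s₂³ + s₃³ = m·p₁ if and only if p₁² ≤ m/6. -/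
/-!
For `a + b + c = 0` the power sums `q = a² + b² + c²`, `t = a³ + b³ + c³` satisfy
`q³ - 6 t² = 2 ((a - b)(b - c)(c - a))²`, twice the discriminant of the cubic with roots
`a, b, c`; hence `6 t² ≤ q³`. Conversely, if `6 t² ≤ q³` then the points `r cos (θ + 2πk/3)`,
`k = 0, 1, 2`, with `r = √(2q/3)` have power sums `3r²/2 = q` and `3r³ cos (3θ) / 4`, and `θ` can be
chosen so that the latter equals `t`.
-/

open Real

theorem sq_add_sq_add_sq_pow_three_sub_six_mul_sq {a b c : ℝ} (h : a + b + c = 0) :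
    (a ^ 2 + b ^ 2 + c ^ 2) ^ 3 - 6 * (a ^ 3 + b ^ 3 + c ^ 3) ^ 2 =
      2 * ((a - b) * (b - c) * (c - a)) ^ 2 := by
  obtain rfl : c = -a - b := by linarith
  ring

theorem six_mul_cube_sum_sq_le {a b c : ℝ} (h : a + b + c = 0) :
    6 * (a ^ 3 + b ^ 3 + c ^ 3) ^ 2 ≤ (a ^ 2 + b ^ 2 + c ^ 2) ^ 3 := by
  have := sq_add_sq_add_sq_pow_three_sub_six_mul_sq h
  nlinarith [sq_nonneg ((a - b) * (b - c) * (c - a))]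

theorem exists_mul_cos_eq {K t : ℝ} (ht : |t| ≤ K) : ∃ φ, K * cos φ = t := by
  rcases (abs_nonneg t).trans ht |>.eq_or_lt with hK | hK
  · exact ⟨0, by rw [← hK] at ht ⊢; simpa using (abs_nonpos_iff.mp ht).symm⟩
  · have hle : |t / K| ≤ 1 := by
      rwa [abs_div, abs_of_pos hK, div_le_one hK]
    refine ⟨arccos (t / K), ?_⟩
    rw [cos_arccos (abs_le.mp hle).1 (abs_le.mp hle).2]
    field_simp

theorem exists_sum_eq_zero_of_cos_three_mul (r θ : ℝ) :
    ∃ a b c : ℝ, a + b + c = 0 ∧ a ^ 2 + b ^ 2 + c ^ 2 = 3 / 2 * r ^ 2 ∧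
      a ^ 3 + b ^ 3 + c ^ 3 = 3 / 4 * r ^ 3 * cos (3 * θ) := by
  have hs : √3 ^ 2 = 3 := sq_sqrt (by norm_num)
  have hcs := sin_sq_add_cos_sq θ
  refine ⟨r * cos θ, r * (-cos θ - √3 * sin θ) / 2, r * (-cos θ + √3 * sin θ) / 2,
    by ring, ?_, ?_⟩
  · linear_combination (r ^ 2 * sin θ ^ 2 / 2) * hs + 3 / 2 * r ^ 2 * hcs
  · rw [cos_three_mul]
    linear_combination (-3 / 4 * r ^ 3 * cos θ * sin θ ^ 2) * hs - 9 / 4 * r ^ 3 * cos θ * hcs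

theorem exists_sum_eq_zero_of_six_mul_sq_le {q t : ℝ} (h : 6 * t ^ 2 ≤ q ^ 3) :
    ∃ a b c : ℝ, a + b + c = 0 ∧ a ^ 2 + b ^ 2 + c ^ 2 = q ∧ a ^ 3 + b ^ 3 + c ^ 3 = t := by
  have hq : 0 ≤ q := (Odd.pow_nonneg_iff (n := 3) (by decide)).mp (by nlinarith [sq_nonneg t])
  set r := √(2 * q / 3)
  have hr : r ^ 2 = 2 * q / 3 := sq_sqrt (by positivity)
  have hK : (3 / 4 * r ^ 3) ^ 2 = q ^ 3 / 6 := by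
    calc (3 / 4 * r ^ 3) ^ 2 = 9 / 16 * (r ^ 2) ^ 3 := by ring
      _ = q ^ 3 / 6 := by rw [hr]; ring
  obtain ⟨φ, hφ⟩ : ∃ φ, 3 / 4 * r ^ 3 * cos φ = t :=
    exists_mul_cos_eq (abs_le_of_sq_le_sq (by rw [hK]; linarith) (by positivity))
  obtain ⟨a, b, c, hsum, hsq, hcube⟩ := exists_sum_eq_zero_of_cos_three_mul r (φ / 3)
  refine ⟨a, b, c, hsum, by rw [hsq, hr]; ring, ?_⟩
  rwa [hcube, mul_div_cancel₀ φ three_ne_zero]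

theorem exists_sum_eq_zero_iff_six_mul_sq_le (q t : ℝ) :
    (∃ a b c : ℝ, a + b + c = 0 ∧ a ^ 2 + b ^ 2 + c ^ 2 = q ∧ a ^ 3 + b ^ 3 + c ^ 3 = t) ↔
      6 * t ^ 2 ≤ q ^ 3 := by
  constructor
  · rintro ⟨a, b, c, hsum, rfl, rfl⟩
    exact six_mul_cube_sum_sq_le hsum
  · exact exists_sum_eq_zero_of_six_mul_sq_le

theorem stmt_2 (m p₁ : ℝ) (hm : 0 < m) :
    (∃ s₁ s₂ s₃ : ℝ, s₁ + s₂ + s₃ = 0 ∧ s₁ ^ 2 + s₂ ^ 2 + s₃ ^ 2 = m ∧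
      s₁ ^ 3 + s₂ ^ 3 + s₃ ^ 3 = m * p₁) ↔ p₁ ^ 2 ≤ m / 6 := by
  rw [exists_sum_eq_zero_iff_six_mul_sq_le, le_div_iff₀ (by norm_num : (0 : ℝ) < 6)]
  calc 6 * (m * p₁) ^ 2 ≤ m ^ 3 ↔ m ^ 2 * (p₁ ^ 2 * 6) ≤ m ^ 2 * m := by ring_nf
    _ ↔ p₁ ^ 2 * 6 ≤ m := mul_le_mul_iff_right₀ (by positivity)
end

section
/- Let U₁ be a real m×r matrix with U₁ᵀU₁ invertible, let U₂ be a real m×s matrix with s ≥ 1 each of whose columns lies in the column space of U₁, and let v ∈ ℝᵐ lie in the column space of U₁. Set P = U₁(U₁ᵀU₁)⁻²U₁ᵀ, G = Iₛ + U₂ᵀPU₂, and g = U₂ᵀPv. Then for any real number c, there exist y₁ ∈ ℝʳ and y₂ ∈ ℝˢ with U₁y₁ + U₂y₂ = v and ‖y₁‖² + ‖y₂‖² = c if and only if vᵀPv − gᵀG⁻¹g ≤ c. -/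
/-!
Write `v = U₁ x` and `U₂ = U₁ W`. Since `U₁` is injective, the linear constraint forces
`y₁ = x - W y₂`, and since `U₁ᵀ P U₁ = 1` the data become `vᵀPv = xᵀx`, `g = Wᵀx`,
`G = 1 + WᵀW`. The attainable values of `‖y₁‖² + ‖y₂‖²` are thus those of the ridge objective
`‖x - W y‖² + ‖y‖² = xᵀx - 2 gᵀy + yᵀG y`; completing the square with `G` positive definite
shows that this range is `[xᵀx - gᵀG⁻¹g, ∞)`, every value above the minimum being reached
along any nonzero direction in `ℝˢ`.
-/

open Matrix

theorem sum_sq_eq_dotProduct_self {κ R : Type*} [Fintype κ] [CommSemiring R] (y : κ → R) :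
    ∑ i, y i ^ 2 = y ⬝ᵥ y := by
  simp only [dotProduct, sq]

namespace Matrix

variable {ι κ : Type*} [Fintype κ]

theorem exists_mul_eq_of_forall_exists_mulVec_eq_col {R : Type*} [CommSemiring R]
    {μ : Type*} {U : Matrix ι κ R} {B : Matrix ι μ R}
    (h : ∀ j, ∃ x, U *ᵥ x = fun i => B i j) : ∃ W : Matrix κ μ R, U * W = B := by
  choose x hx using h
  refine ⟨(of x)ᵀ, ?_⟩
  ext i j
  simpa [mul_apply, mulVec, dotProduct] using congrFun (hx j) i

variable [Fintype ι]

theorem mulVec_dotProduct_mulVec_mulVec {R : Type*} [CommSemiring R]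
    (U : Matrix ι κ R) (P : Matrix ι ι R) (x y : κ → R) :
    U *ᵥ x ⬝ᵥ P *ᵥ (U *ᵥ y) = x ⬝ᵥ (Uᵀ * P * U) *ᵥ y := by
  rw [← mulVec_mulVec, ← mulVec_mulVec, dotProduct_mulVec x, vecMul_transpose]

theorem mulVec_injective_of_isUnit_transpose_mul_self {K : Type*} [Field K] [DecidableEq κ]
    {U : Matrix ι κ K} (hU : IsUnit (Uᵀ * U)) : Function.Injective U.mulVec := by
  refine Function.Injective.of_comp (f := Uᵀ.mulVec) ?_
  have hcomp : Uᵀ.mulVec ∘ U.mulVec = (Uᵀ * U).mulVec := funext fun x => mulVec_mulVec x Uᵀ U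
  rw [hcomp]
  exact mulVec_injective_iff_isUnit.mpr hU

theorem transpose_mul_mul_inv_sq_mul_transpose_mul {K : Type*} [Field K] [DecidableEq κ]
    {U : Matrix ι κ K} (hU : IsUnit (Uᵀ * U)) :
    Uᵀ * (U * ((Uᵀ * U)⁻¹) ^ 2 * Uᵀ) * U = 1 := by
  have hdet := (isUnit_iff_isUnit_det _).mp hU
  calc Uᵀ * (U * ((Uᵀ * U)⁻¹) ^ 2 * Uᵀ) * U
      = (Uᵀ * U) * (Uᵀ * U)⁻¹ * ((Uᵀ * U)⁻¹ * (Uᵀ * U)) := by simp only [sq, Matrix.mul_assoc]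
    _ = 1 := by rw [mul_nonsing_inv _ hdet, nonsing_inv_mul _ hdet, Matrix.one_mul]

theorem PosDef.exists_dotProduct_mulVec_eq_iff [Nonempty κ] {G : Matrix κ κ ℝ} (hG : G.PosDef)
    {t : ℝ} : (∃ x, x ⬝ᵥ G *ᵥ x = t) ↔ 0 ≤ t := by
  constructor
  · rintro ⟨x, rfl⟩
    simpa using hG.posSemidef.dotProduct_mulVec_nonneg x
  · intro ht
    obtain ⟨e, he⟩ := exists_ne (0 : κ → ℝ)
    have hpos : 0 < e ⬝ᵥ G *ᵥ e := by simpa using hG.dotProduct_mulVec_pos he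
    refine ⟨√(t / (e ⬝ᵥ G *ᵥ e)) • e, ?_⟩
    rw [mulVec_smul, dotProduct_smul, smul_dotProduct, smul_smul, smul_eq_mul,
      Real.mul_self_sqrt (div_nonneg ht hpos.le), div_mul_cancel₀ _ hpos.ne']

variable [DecidableEq κ]

theorem PosDef.sub_two_mul_dotProduct_add_dotProduct_mulVec {G : Matrix κ κ ℝ} (hG : G.PosDef)
    (a : ℝ) (g y : κ → ℝ) :
    a - 2 * (g ⬝ᵥ y) + y ⬝ᵥ G *ᵥ y =
      a - g ⬝ᵥ G⁻¹ *ᵥ g + (y - G⁻¹ *ᵥ g) ⬝ᵥ G *ᵥ (y - G⁻¹ *ᵥ g) := by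
  have hGz : G *ᵥ (G⁻¹ *ᵥ g) = g := by
    rw [mulVec_mulVec, mul_nonsing_inv _ ((isUnit_iff_isUnit_det _).mp hG.isUnit), one_mulVec]
  have hsymm : Gᵀ = G := by
    simpa [conjTranspose_eq_transpose_of_trivial] using hG.isHermitian.eq
  have hzy : G⁻¹ *ᵥ g ⬝ᵥ G *ᵥ y = g ⬝ᵥ y := by
    rw [← hsymm, dotProduct_transpose_mulVec, hsymm, hGz, dotProduct_comm]
  rw [mulVec_sub, hGz, dotProduct_sub, sub_dotProduct, sub_dotProduct, hzy, dotProduct_comm y g,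
    dotProduct_comm (G⁻¹ *ᵥ g) g]
  ring

theorem PosDef.exists_sub_two_mul_dotProduct_add_eq_iff [Nonempty κ] {G : Matrix κ κ ℝ}
    (hG : G.PosDef) (a : ℝ) (g : κ → ℝ) (c : ℝ) :
    (∃ y, a - 2 * (g ⬝ᵥ y) + y ⬝ᵥ G *ᵥ y = c) ↔ a - g ⬝ᵥ G⁻¹ *ᵥ g ≤ c := by
  set z := G⁻¹ *ᵥ g
  simp_rw [hG.sub_two_mul_dotProduct_add_dotProduct_mulVec, ← eq_sub_iff_add_eq',
    ← sub_nonneg (b := a - g ⬝ᵥ z)]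
  rw [← hG.exists_dotProduct_mulVec_eq_iff]
  exact ⟨fun ⟨y, hy⟩ => ⟨y - z, hy⟩, fun ⟨x, hx⟩ => ⟨x + z, by rwa [add_sub_cancel_right]⟩⟩

theorem dotProduct_sub_mulVec_add_dotProduct_self (W : Matrix ι κ ℝ) (x : ι → ℝ) (y : κ → ℝ) :
    (x - W *ᵥ y) ⬝ᵥ (x - W *ᵥ y) + y ⬝ᵥ y =
      x ⬝ᵥ x - 2 * (Wᵀ *ᵥ x ⬝ᵥ y) + y ⬝ᵥ (1 + Wᵀ * W) *ᵥ y := by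
  rw [add_mulVec, one_mulVec, dotProduct_add, ← mulVec_mulVec, dotProduct_transpose_mulVec,
    dotProduct_comm (Wᵀ *ᵥ x), dotProduct_transpose_mulVec]
  simp only [sub_dotProduct, dotProduct_sub, dotProduct_comm (W *ᵥ y) x]
  ring

theorem exists_dotProduct_sub_mulVec_add_dotProduct_self_eq_iff [Nonempty κ]
    (W : Matrix ι κ ℝ) (x : ι → ℝ) (c : ℝ) :
    (∃ y, (x - W *ᵥ y) ⬝ᵥ (x - W *ᵥ y) + y ⬝ᵥ y = c) ↔
      x ⬝ᵥ x - Wᵀ *ᵥ x ⬝ᵥ (1 + Wᵀ * W)⁻¹ *ᵥ (Wᵀ *ᵥ x) ≤ c := by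
  have hG : (1 + Wᵀ * W).PosDef := by
    simpa [conjTranspose_eq_transpose_of_trivial] using
      PosDef.one.add_posSemidef (posSemidef_conjTranspose_mul_self W)
  simp_rw [dotProduct_sub_mulVec_add_dotProduct_self]
  exact hG.exists_sub_two_mul_dotProduct_add_eq_iff _ _ _

end Matrix

theorem stmt_3 (m r s : ℕ) (hs : 1 ≤ s)
    (U₁ : Matrix (Fin m) (Fin r) ℝ) (U₂ : Matrix (Fin m) (Fin s) ℝ)
    (v : Fin m → ℝ)
    (hU₁ : IsUnit (U₁ᵀ * U₁))
    (hU₂ : ∀ j : Fin s, ∃ x : Fin r → ℝ, U₁.mulVec x = fun i => U₂ i j)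
    (hv : ∃ x : Fin r → ℝ, U₁.mulVec x = v)
    (P : Matrix (Fin m) (Fin m) ℝ) (hP : P = U₁ * ((U₁ᵀ * U₁)⁻¹) ^ 2 * U₁ᵀ)
    (G : Matrix (Fin s) (Fin s) ℝ) (hG : G = 1 + U₂ᵀ * P * U₂)
    (g : Fin s → ℝ) (hg : g = (U₂ᵀ * P).mulVec v)
    (c : ℝ) :
    (∃ (y₁ : Fin r → ℝ) (y₂ : Fin s → ℝ),
        U₁.mulVec y₁ + U₂.mulVec y₂ = v ∧
        (∑ i, y₁ i ^ 2) + (∑ i, y₂ i ^ 2) = c) ↔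
    v ⬝ᵥ P.mulVec v - g ⬝ᵥ G⁻¹.mulVec g ≤ c := by
  obtain ⟨W, rfl⟩ := exists_mul_eq_of_forall_exists_mulVec_eq_col hU₂
  obtain ⟨x, rfl⟩ := hv
  have : Nonempty (Fin s) := Fin.pos_iff_nonempty.mp hs
  have hPU : U₁ᵀ * P * U₁ = 1 := hP ▸ transpose_mul_mul_inv_sq_mul_transpose_mul hU₁
  have hWPW : (U₁ * W)ᵀ * P * U₁ = Wᵀ := by
    rw [transpose_mul, Matrix.mul_assoc, Matrix.mul_assoc, ← Matrix.mul_assoc U₁ᵀ, hPU,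
      Matrix.mul_one]
  have hG' : G = 1 + Wᵀ * W := by rw [hG, ← hWPW, Matrix.mul_assoc _ U₁]
  have hg' : g = Wᵀ *ᵥ x := by rw [hg, mulVec_mulVec, hWPW]
  have hvPv : U₁ *ᵥ x ⬝ᵥ P *ᵥ (U₁ *ᵥ x) = x ⬝ᵥ x := by
    rw [mulVec_dotProduct_mulVec_mulVec, hPU, one_mulVec]
  have hsolve (y₁ : Fin r → ℝ) (y₂ : Fin s → ℝ) :
      U₁ *ᵥ y₁ + (U₁ * W) *ᵥ y₂ = U₁ *ᵥ x ↔ y₁ = x - W *ᵥ y₂ := by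
    rw [← mulVec_mulVec, ← mulVec_add,
      (mulVec_injective_of_isUnit_transpose_mul_self hU₁).eq_iff, eq_sub_iff_add_eq]
  simp only [hsolve, sum_sq_eq_dotProduct_self, hG', hg', hvPv]
  rw [exists_comm]
  simp only [exists_eq_left]
  exact exists_dotProduct_sub_mulVec_add_dotProduct_self_eq_iff W x c
end

section
/- Let n ≥ 1, N ≥ 1, and for k = 1,…,N let M⁽ᵏ⁾ be a real mₖ×n matrix with mₖ ≥ n+2 satisfying M⁽ᵏ⁾ᵀM⁽ᵏ⁾ = mₖ·Iₙ and 1ₘₖᵀM⁽ᵏ⁾ = 0ₙᵀ. If all the matrices have the same Kollo skewness, τ(M⁽ᵏ⁾) = τ₀ for every k, then the vertical concatenation [M⁽¹⁾; … ; M⁽ᴺ⁾] also has Kollo skewness τ₀. -/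
open Matrix

/-- The Kollo skewness of a sample matrix `M` with rows indexed by `ι`:
`τ(M) = (card ι)⁻¹ · Σᵢ (rᵢ·1ₙ)² · rᵢᵀ` where `rᵢ` denotes the `i`-th row. -/
noncomputable def kolloSkew {ι : Type*} [Fintype ι] {n : ℕ}
    (M : Matrix ι (Fin n) ℝ) : Fin n → ℝ :=
  fun j => (Fintype.card ι : ℝ)⁻¹ * ∑ i, (∑ j', M i j') ^ 2 * M i j

/-! The skewness sum `∑ᵢ (rᵢ·1ₙ)² rᵢ` is additive over blocks of rows, so `card • τ` of the
concatenation is the sum of the `mₖ • τ(M⁽ᵏ⁾) = mₖ • τ₀`; dividing by `∑ₖ mₖ` gives `τ₀`. -/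

def stackRows {κ α R : Type*} {ι : κ → Type*} (M : ∀ k, Matrix (ι k) α R) :
    Matrix ((k : κ) × ι k) α R :=
  of fun p => M p.1 p.2

section KolloSkew

variable {n : ℕ}

theorem card_mul_kolloSkew {ι : Type*} [Fintype ι] (M : Matrix ι (Fin n) ℝ) (j : Fin n) :
    (Fintype.card ι : ℝ) * kolloSkew M j = ∑ i, (∑ j', M i j') ^ 2 * M i j := by
  rcases isEmpty_or_nonempty ι with _ | _
  · simp
  · exact mul_inv_cancel_left₀ (Nat.cast_ne_zero.mpr Fintype.card_ne_zero) _

theorem kolloSkew_of_isEmpty {ι : Type*} [Fintype ι] [IsEmpty ι] (M : Matrix ι (Fin n) ℝ) :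
    kolloSkew M = 0 := by
  ext j
  simp [kolloSkew]

variable {κ : Type*} [Fintype κ] {ι : κ → Type*} [∀ k, Fintype (ι k)]

theorem card_mul_kolloSkew_stackRows (M : ∀ k, Matrix (ι k) (Fin n) ℝ) (j : Fin n) :
    (Fintype.card ((k : κ) × ι k) : ℝ) * kolloSkew (stackRows M) j =
      ∑ k, (Fintype.card (ι k) : ℝ) * kolloSkew (M k) j := by
  simp only [card_mul_kolloSkew, Fintype.sum_sigma, stackRows, of_apply]

theorem kolloSkew_stackRows_of_forall_eq [Nonempty κ] (M : ∀ k, Matrix (ι k) (Fin n) ℝ)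
    {τ₀ : Fin n → ℝ} (hτ : ∀ k, kolloSkew (M k) = τ₀) :
    kolloSkew (stackRows M) = τ₀ := by
  rcases isEmpty_or_nonempty ((k : κ) × ι k) with hempty | hne
  · -- no rows at all: both sides are the junk value `0⁻¹ * 0`
    obtain ⟨k⟩ := ‹Nonempty κ›
    have : IsEmpty (ι k) := ⟨fun i => hempty.false ⟨k, i⟩⟩
    rw [kolloSkew_of_isEmpty, ← hτ k, kolloSkew_of_isEmpty]
  · ext j
    have hcard : (Fintype.card ((k : κ) × ι k) : ℝ) ≠ 0 :=
      Nat.cast_ne_zero.mpr Fintype.card_ne_zero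
    refine mul_left_cancel₀ hcard ?_
    rw [card_mul_kolloSkew_stackRows]
    simp only [hτ, ← Finset.sum_mul, Fintype.card_sigma, Nat.cast_sum]

end KolloSkew

theorem stmt_7_general (n N : ℕ) (hN : 1 ≤ N)
    (m : Fin N → ℕ)
    (M : ∀ k : Fin N, Matrix (Fin (m k)) (Fin n) ℝ)
    (τ₀ : Fin n → ℝ) (hτ : ∀ k, kolloSkew (M k) = τ₀)
    (C : Matrix ((k : Fin N) × Fin (m k)) (Fin n) ℝ)
    (hC : ∀ (k : Fin N) (i : Fin (m k)) (j : Fin n), C ⟨k, i⟩ j = M k i j) :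
    kolloSkew C = τ₀ := by
  have : Nonempty (Fin N) := Fin.pos_iff_nonempty.mp hN
  obtain rfl : C = stackRows M := ext fun ⟨k, i⟩ j => hC k i j
  exact kolloSkew_stackRows_of_forall_eq M hτ

theorem stmt_7 (n N : ℕ) (hn : 1 ≤ n) (hN : 1 ≤ N)
    (m : Fin N → ℕ) (hm : ∀ k, n + 2 ≤ m k)
    (M : ∀ k : Fin N, Matrix (Fin (m k)) (Fin n) ℝ)
    (hL1 : ∀ k, (M k)ᵀ * (M k) = (m k : ℝ) • (1 : Matrix (Fin n) (Fin n) ℝ))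
    (hL2 : ∀ k, ∀ j : Fin n, ∑ i, M k i j = 0)
    (τ₀ : Fin n → ℝ) (hτ : ∀ k, kolloSkew (M k) = τ₀)
    (C : Matrix ((k : Fin N) × Fin (m k)) (Fin n) ℝ)
    (hC : ∀ (k : Fin N) (i : Fin (m k)) (j : Fin n), C ⟨k, i⟩ j = M k i j) :
    kolloSkew C = τ₀ :=
  stmt_7_general n N hN m M τ₀ hτ C hC
end

section
/- Let n ≥ 1 and let Ω be a real n×n orthogonal matrix whose first column equals n^{-1/2}·1ₙ (equivalently, 1ₙᵀΩ = √n·[1,0,…,0]). Let S be a real m×n matrix with rows s₁,…,sₘ, and set M = SΩᵀ with rows r₁,…,rₘ. Then Σᵢ₌₁ᵐ (rᵢ·1ₙ)²·rᵢᵀ = n·Ω·(Σᵢ₌₁ᵐ sᵢ₁²·sᵢᵀ), where sᵢ₁ denotes the first entry of the row sᵢ. -/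
/-!
Orthogonality gives `Ωᵀ 1ₙ = √n e₁` once the first column of `Ω` is `1ₙ / √n`, so every row sum
of `M = S Ωᵀ` is `√n` times the first entry of the corresponding row of `S`. The Kollo sum is then
`w ᵀ (S Ωᵀ) = Ω (Sᵀ w)` with weights `wᵢ = n sᵢ₁²`.
-/

open Matrix

namespace Matrix

variable {R ι κ : Type*} [Field R] [Fintype ι] [DecidableEq ι]

theorem transpose_mulVec_one_of_col_eq_const {Ω : Matrix ι ι R} (hΩ : Ωᵀ * Ω = 1) {k : ι}
    {c : R} (hc : c ≠ 0) (hcol : ∀ i, Ω i k = c) :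
    Ωᵀ *ᵥ 1 = c⁻¹ • Pi.single k 1 := by
  have hcolv : Ω *ᵥ Pi.single k 1 = c • 1 := by
    ext i
    simp [hcol]
  calc Ωᵀ *ᵥ 1 = c⁻¹ • Ωᵀ *ᵥ (Ω *ᵥ Pi.single k 1) := by
        rw [hcolv, mulVec_smul, smul_smul, inv_mul_cancel₀ hc, one_smul]
    _ = c⁻¹ • Pi.single k 1 := by rw [mulVec_mulVec, hΩ, one_mulVec]

theorem sum_mul_transpose_apply_of_col_eq_const {Ω : Matrix ι ι R} (hΩ : Ωᵀ * Ω = 1) {k : ι}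
    {c : R} (hc : c ≠ 0) (hcol : ∀ i, Ω i k = c) (S : Matrix κ ι R) (i : κ) :
    ∑ j, (S * Ωᵀ) i j = c⁻¹ * S i k := by
  have hsum : ∑ j, (S * Ωᵀ) i j = ((S * Ωᵀ) *ᵥ 1) i := by simp [mulVec, dotProduct]
  rw [hsum, ← mulVec_mulVec, transpose_mulVec_one_of_col_eq_const hΩ hc hcol, mulVec_smul,
    mulVec_single_one]
  simp

end Matrix

theorem stmt_8 (n m : ℕ) (hn : 0 < n)
    (Ω : Matrix (Fin n) (Fin n) ℝ)
    (hΩ : Ωᵀ * Ω = 1)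
    (hcol : ∀ i : Fin n, Ω i ⟨0, hn⟩ = (Real.sqrt n)⁻¹)
    (S : Matrix (Fin m) (Fin n) ℝ)
    (M : Matrix (Fin m) (Fin n) ℝ) (hM : M = S * Ωᵀ) :
    (fun j => ∑ i, (∑ j', M i j') ^ 2 * M i j) =
      (n : ℝ) • Ω.mulVec (fun j => ∑ i, (S i ⟨0, hn⟩) ^ 2 * S i j) := by
  subst hM
  have hsqrt : (Real.sqrt n)⁻¹ ≠ 0 := inv_ne_zero (Real.sqrt_pos.mpr (by exact_mod_cast hn)).ne'
  have hrow (i : Fin m) : ∑ j', (S * Ωᵀ) i j' = Real.sqrt n * S i ⟨0, hn⟩ := by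
    rw [sum_mul_transpose_apply_of_col_eq_const hΩ hsqrt hcol, inv_inv]
  let w : Fin m → ℝ := fun i => S i ⟨0, hn⟩ ^ 2
  calc (fun j => ∑ i, (∑ j', (S * Ωᵀ) i j') ^ 2 * (S * Ωᵀ) i j)
      = ((n : ℝ) • w) ᵥ* (S * Ωᵀ) := by
        ext j
        simp only [hrow, mul_pow, Real.sq_sqrt (Nat.cast_nonneg n), vecMul, dotProduct,
          Pi.smul_apply, smul_eq_mul, w]
    _ = (n : ℝ) • Ω *ᵥ (w ᵥ* S) := by
        rw [smul_vecMul, ← vecMul_vecMul, vecMul_transpose]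
end

section
/- Let μ ∈ ℝⁿ, let A be a real n×n matrix, let L be a real m×n matrix satisfying LᵀL = Iₙ and 1ₘᵀL = 0ₙᵀ, let R be a real n×n orthogonal matrix, and let Q be a real m×m permutation matrix. Define X = 1ₘμᵀ + √m·QLRA. Then the sample mean of X matches the target: m⁻¹·1ₘᵀX = μᵀ; and the sample covariance of X matches the target: m⁻¹·(X − 1ₘμᵀ)ᵀ(X − 1ₘμᵀ) = AᵀA. -/
/-!
The deviation `X - J = √m • QLRA` has zero column sums, since left multiplication by a
permutation matrix only reorders rows and `1ᵀL = 0`. Each of `Q`, `L`, `R` satisfies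
`Uᵀ U = 1`, so it drops out of the Gram matrix, leaving `m • AᵀA`.
-/

open Matrix

namespace Matrix

variable {l m n R : Type*} [Fintype m] [CommRing R]

theorem transpose_mul_self_mul_of_transpose_mul_self_eq_one [Fintype n] [DecidableEq n]
    {U : Matrix m n R} (hU : Uᵀ * U = 1) (B : Matrix n l R) :
    (U * B)ᵀ * (U * B) = Bᵀ * B := by
  rw [transpose_mul, Matrix.mul_assoc, ← Matrix.mul_assoc Uᵀ, hU, Matrix.one_mul]

theorem transpose_permMatrix_mul_self [DecidableEq m] (σ : Equiv.Perm m) :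
    (σ.permMatrix R)ᵀ * σ.permMatrix R = 1 := by
  rw [transpose_permMatrix, ← permMatrix_mul, mul_inv_cancel, permMatrix_one]

theorem sum_permMatrix_mul_apply [DecidableEq m] (σ : Equiv.Perm m) (M : Matrix m n R)
    (j : n) : ∑ i, (σ.permMatrix R * M) i j = ∑ i, M i j := by
  simp only [PEquiv.toMatrix_toPEquiv_mul, submatrix_apply, id]
  exact Equiv.sum_comp σ (M · j)

theorem sum_mul_apply_eq_zero [Fintype n] {L : Matrix m n R} (hL : ∀ k, ∑ i, L i k = 0)
    (B : Matrix n l R) (j : l) : ∑ i, (L * B) i j = 0 := by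
  simp only [mul_apply]
  rw [Finset.sum_comm]
  simp [← Finset.sum_mul, hL]

end Matrix

theorem stmt_10 (m n : ℕ) (hm : 0 < m)
    (μ : Fin n → ℝ) (A : Matrix (Fin n) (Fin n) ℝ)
    (L : Matrix (Fin m) (Fin n) ℝ)
    (hL1 : Lᵀ * L = 1) (hL2 : ∀ j : Fin n, ∑ i, L i j = 0)
    (R : Matrix (Fin n) (Fin n) ℝ) (hR : Rᵀ * R = 1)
    (Q : Matrix (Fin m) (Fin m) ℝ)
    (hQ : ∃ σ : Equiv.Perm (Fin m), Q = σ.permMatrix ℝ)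
    (J : Matrix (Fin m) (Fin n) ℝ) (hJ : J = Matrix.of fun _ j => μ j)
    (X : Matrix (Fin m) (Fin n) ℝ)
    (hX : X = J + Real.sqrt m • (Q * L * R * A)) :
    (∀ j : Fin n, (m : ℝ)⁻¹ * ∑ i, X i j = μ j) ∧
    (m : ℝ)⁻¹ • ((X - J)ᵀ * (X - J)) = Aᵀ * A := by
  obtain ⟨σ, rfl⟩ := hQ
  have hm' : (m : ℝ) ≠ 0 := by positivity
  have hdev : X - J = √m • (σ.permMatrix ℝ * (L * (R * A))) := by
    rw [hX, add_sub_cancel_left, Matrix.mul_assoc, Matrix.mul_assoc]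
  constructor
  · intro j
    have hcol : ∑ i, (σ.permMatrix ℝ * (L * (R * A))) i j = 0 := by
      rw [sum_permMatrix_mul_apply, sum_mul_apply_eq_zero hL2]
    have hsum : ∑ i, X i j = m * μ j := by
      rw [← sub_add_cancel X J, hdev]
      simp [Finset.sum_add_distrib, ← Finset.mul_sum, hcol, hJ]
    rw [hsum, inv_mul_cancel_left₀ hm']
  · rw [hdev, transpose_smul, Matrix.smul_mul, Matrix.mul_smul, smul_smul, smul_smul,
      mul_assoc, Real.mul_self_sqrt (Nat.cast_nonneg m), inv_mul_cancel₀ hm', one_smul,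
      transpose_mul_self_mul_of_transpose_mul_self_eq_one (transpose_permMatrix_mul_self σ),
      transpose_mul_self_mul_of_transpose_mul_self_eq_one hL1,
      transpose_mul_self_mul_of_transpose_mul_self_eq_one hR]
end

section
/- Let n ≥ 1, m ≥ 1, let Ω be a real n×n orthogonal matrix whose first column equals n^{-1/2}·1ₙ, and let τ ∈ ℝⁿ. Set p = n⁻¹·Ωᵀτ. If S is a real m×n matrix with rows s₁,…,sₘ satisfying m⁻¹·Σᵢ₌₁ᵐ sᵢ₁²·sᵢᵀ = p, then the matrix M = SΩᵀ with rows r₁,…,rₘ satisfies m⁻¹·Σᵢ₌₁ᵐ (rᵢ·1ₙ)²·rᵢᵀ = τ. -/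
/-!
The first column of `Ω` is `n^{-1/2} 𝟙`, so orthogonality gives `Ωᵀ 𝟙 = √n e₁`. Hence the row sums
of `M = S Ωᵀ` are `√n sᵢ₁`, and since `rᵢ = Ω sᵢ`,
`m⁻¹ Σ (rᵢ·𝟙)² rᵢ = n Ω (m⁻¹ Σ sᵢ₁² sᵢ) = n Ω p = Ω Ωᵀ τ = τ`.
-/

open Matrix

section

variable {ι κ : Type*} [Fintype κ] [DecidableEq κ] {K : Type*} [Field K]

theorem Matrix.transpose_mulVec_one_of_col_eq {Ω : Matrix κ κ K} (hΩ : Ωᵀ * Ω = 1) {k : κ} {c : K}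
    (hc : c ≠ 0) (hcol : ∀ i, Ω i k = c) : Ωᵀ *ᵥ (fun _ => 1) = c⁻¹ • Pi.single k 1 := by
  have hone : (fun _ => (1 : K)) = c⁻¹ • Ω *ᵥ Pi.single k 1 := by
    ext i
    simp [hcol, hc]
  rw [hone, mulVec_smul, mulVec_mulVec, hΩ, one_mulVec]

theorem Matrix.sum_mul_transpose_apply_of_col_eq {Ω : Matrix κ κ K} (hΩ : Ωᵀ * Ω = 1) {k : κ}
    {c : K} (hc : c ≠ 0) (hcol : ∀ i, Ω i k = c) (S : Matrix ι κ K) (i : ι) :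
    ∑ j, (S * Ωᵀ) i j = c⁻¹ * S i k := by
  calc ∑ j, (S * Ωᵀ) i j = ((S * Ωᵀ) *ᵥ fun _ => 1) i := by simp [mulVec, dotProduct]
    _ = (S *ᵥ (c⁻¹ • Pi.single k 1)) i := by
      rw [← mulVec_mulVec, transpose_mulVec_one_of_col_eq hΩ hc hcol]
    _ = c⁻¹ * S i k := by simp [mulVec_smul]

end

theorem stmt_11 (n m : ℕ) (hn : 0 < n) (hm : 0 < m)
    (Ω : Matrix (Fin n) (Fin n) ℝ)
    (hΩ : Ωᵀ * Ω = 1)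
    (hcol : ∀ i : Fin n, Ω i ⟨0, hn⟩ = (Real.sqrt n)⁻¹)
    (τ : Fin n → ℝ) (p : Fin n → ℝ) (hp : p = (n : ℝ)⁻¹ • Ωᵀ.mulVec τ)
    (S : Matrix (Fin m) (Fin n) ℝ)
    (hS : ∀ j : Fin n, (m : ℝ)⁻¹ * ∑ i, (S i ⟨0, hn⟩) ^ 2 * S i j = p j)
    (M : Matrix (Fin m) (Fin n) ℝ) (hM : M = S * Ωᵀ) :
    ∀ j : Fin n, (m : ℝ)⁻¹ * ∑ i, (∑ j', M i j') ^ 2 * M i j = τ j := by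
  intro j
  set w : Fin m → ℝ := fun i => S i ⟨0, hn⟩ ^ 2
  have hn' : (n : ℝ) ≠ 0 := by positivity
  have hm' : (m : ℝ) ≠ 0 := by positivity
  have hrow (i : Fin m) : ∑ j', M i j' = √n * S i ⟨0, hn⟩ := by
    rw [hM, sum_mul_transpose_apply_of_col_eq hΩ (by positivity) hcol, inv_inv]
  have hwS : w ᵥ* S = (m : ℝ) • p := by
    ext k
    rw [Pi.smul_apply, smul_eq_mul, ← hS k, mul_inv_cancel_left₀ hm']
    rfl
  calc (m : ℝ)⁻¹ * ∑ i, (∑ j', M i j') ^ 2 * M i j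
      = (m : ℝ)⁻¹ * n * (w ᵥ* M) j := by
        simp only [hrow, mul_pow, Real.sq_sqrt (Nat.cast_nonneg n), vecMul, dotProduct,
          Finset.mul_sum, w]
        exact Finset.sum_congr rfl fun i _ => by ring
    _ = n * (Ω *ᵥ p) j := by
        rw [hM, ← vecMul_vecMul, vecMul_transpose, hwS, mulVec_smul, Pi.smul_apply, smul_eq_mul]
        field_simp
    _ = τ j := by
        rw [hp, mulVec_smul, mulVec_mulVec, mul_eq_one_comm.mp hΩ, one_mulVec, Pi.smul_apply,
          smul_eq_mul, mul_inv_cancel_left₀ hn']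
end

section
/- For every p ∈ ℝ there exist real numbers μ, β, α, δ with α > |β| and δ > 0 such that, setting γ = √(α² − β²), the three equations μ + δβ/γ = 0, δα²/γ³ = 1, and 3β/(α·√δ·γ) = p all hold. -/
/-! Normalise so that `γ = 1`: take `β = p / 3` and `α = √(1 + β²)`. The variance condition then
forces `δ = α⁻²`, so `√δ = α⁻¹` and the skewness `3β / (α √δ γ)` collapses to `3β = p`;
finally `μ = -δβ` centres the distribution. -/

lemma sqrt_sq_sqrt_one_add_sq_sub_sq (b : ℝ) : √(√(1 + b ^ 2) ^ 2 - b ^ 2) = 1 := by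
  rw [Real.sq_sqrt (by positivity), add_sub_cancel_right, Real.sqrt_one]

lemma abs_lt_sqrt_one_add_sq (b : ℝ) : |b| < √(1 + b ^ 2) := by
  rw [Real.lt_sqrt (abs_nonneg b), sq_abs]
  linarith

theorem stmt_17 (p : ℝ) :
    ∃ (μ β α δ : ℝ), |β| < α ∧ 0 < δ ∧
      (let γ := Real.sqrt (α ^ 2 - β ^ 2);
        μ + δ * β / γ = 0 ∧
        δ * α ^ 2 / γ ^ 3 = 1 ∧
        3 * β / (α * Real.sqrt δ * γ) = p) := by
  set β := p / 3
  set α := √(1 + β ^ 2)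
  have hα : 0 < α := Real.sqrt_pos.mpr (by positivity)
  refine ⟨-(α ^ 2)⁻¹ * β, β, α, (α ^ 2)⁻¹, abs_lt_sqrt_one_add_sq β, by positivity, ?_⟩
  have hsqrt_δ : √((α ^ 2)⁻¹) = α⁻¹ := by rw [Real.sqrt_inv, Real.sqrt_sq hα.le]
  simp only [α, sqrt_sq_sqrt_one_add_sq_sub_sq]
  rw [hsqrt_δ]
  refine ⟨by ring, by field_simp, by field_simp; ring⟩
end

section
/- The function S : (0,∞) × (0,∞) → ℝ defined by S(α, β) = 2(β − α)·√(α + β + 1)/((α + β + 2)·√(αβ)) is surjective onto ℝ. -/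
/-!
Along the curve `α β = 1`, i.e. `(α, β) = (t⁻¹, t)` with `t > 0`, the skewness is a continuous
function of `t`. For `t ≥ 3` it dominates `√t`, so it tends to `+∞` as `t → ∞`; swapping `α` and
`β` negates the skewness and replaces `t` by `t⁻¹`, so it tends to `-∞` as `t → 0⁺`. The
intermediate value theorem on `(0, ∞)` then gives every real value.
-/

open Real Filter Topology Set

noncomputable def betaSkewness (α β : ℝ) : ℝ :=
  2 * (β - α) * √(α + β + 1) / ((α + β + 2) * √(α * β))

lemma betaSkewness_comm (α β : ℝ) : betaSkewness β α = -betaSkewness α β := by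
  simp only [betaSkewness, add_comm β α, mul_comm β α, ← neg_sub α β]
  ring

lemma continuousOn_betaSkewness_inv_self :
    ContinuousOn (fun t => betaSkewness t⁻¹ t) (Ioi 0) := by
  intro t (ht : 0 < t)
  have hden : (t⁻¹ + t + 2) * √(t⁻¹ * t) ≠ 0 := by positivity
  unfold betaSkewness
  fun_prop (disch := first | exact ht.ne' | exact hden)

lemma sqrt_le_betaSkewness_inv_self {t : ℝ} (ht : 3 ≤ t) : √t ≤ betaSkewness t⁻¹ t := by
  have ht0 : 0 < t := by linarith
  have hfactor : 1 ≤ 2 * (t - t⁻¹) / (t⁻¹ + t + 2) := by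
    rw [one_le_div (by positivity), ← sub_nonneg]
    have hdiff : 2 * (t - t⁻¹) - (t⁻¹ + t + 2) = (t - 3) * (t + 1) / t := by
      field_simp
      ring
    rw [hdiff]
    exact div_nonneg (mul_nonneg (by linarith) (by linarith)) ht0.le
  calc √t ≤ √(t⁻¹ + t + 1) := Real.sqrt_le_sqrt (by have := inv_pos.2 ht0; linarith)
    _ ≤ 2 * (t - t⁻¹) / (t⁻¹ + t + 2) * √(t⁻¹ + t + 1) :=
        le_mul_of_one_le_left (Real.sqrt_nonneg _) hfactor
    _ = betaSkewness t⁻¹ t := by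
        rw [betaSkewness, inv_mul_cancel₀ ht0.ne', Real.sqrt_one, mul_one]
        ring

lemma tendsto_betaSkewness_inv_self_atTop :
    Tendsto (fun t => betaSkewness t⁻¹ t) atTop atTop :=
  tendsto_atTop_mono' atTop ((eventually_ge_atTop 3).mono fun _ => sqrt_le_betaSkewness_inv_self)
    tendsto_sqrt_atTop

lemma tendsto_betaSkewness_inv_self_nhdsGT_zero :
    Tendsto (fun t => betaSkewness t⁻¹ t) (𝓝[>] 0) atBot := by
  refine (tendsto_neg_atTop_atBot.comp
    (tendsto_betaSkewness_inv_self_atTop.comp tendsto_inv_nhdsGT_zero)).congr fun t => ?_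
  rw [Function.comp_apply, Function.comp_apply, inv_inv, betaSkewness_comm, neg_neg]

lemma surjOn_betaSkewness_inv_self : SurjOn (fun t => betaSkewness t⁻¹ t) (Ioi 0) univ :=
  isPreconnected_Ioi.intermediate_value_Iii (le_principal_iff.2 self_mem_nhdsWithin)
    (le_principal_iff.2 (Ioi_mem_atTop 0)) continuousOn_betaSkewness_inv_self
    tendsto_betaSkewness_inv_self_nhdsGT_zero tendsto_betaSkewness_inv_self_atTop

theorem stmt_18 :
    ∀ p : ℝ, ∃ α β : ℝ, 0 < α ∧ 0 < β ∧
      2 * (β - α) * Real.sqrt (α + β + 1) / ((α + β + 2) * Real.sqrt (α * β)) = p := by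
  intro p
  obtain ⟨t, ht, hp⟩ := surjOn_betaSkewness_inv_self (mem_univ p)
  exact ⟨t⁻¹, t, inv_pos.2 ht, ht, hp⟩
end

section
/- For every p ∈ ℝ there exist real numbers α > 0, β > 0, and b < c such that the three equations (αc + βb)/(α + β) = 0, αβ·(c − b)²/((α + β)²·(α + β + 1)) = 1, and 2(β − α)·√(α + β + 1)/((α + β + 2)·√(αβ)) = p all hold. -/
/-! The mean and variance conditions only fix the location and scale of `[b, c]`, which can be
chosen for any `α, β > 0`. The skewness depends on `α, β` alone; on the line `α + β = 1`, with
`t = β - α`, it equals `(4√2/3) · t / √(1 - t²)`, which maps `(-1, 1)` onto `ℝ`. -/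

open Real

theorem exists_abs_lt_one_div_sqrt_one_sub_sq_eq (q : ℝ) :
    ∃ t : ℝ, |t| < 1 ∧ t / √(1 - t ^ 2) = q := by
  set s := √(1 + q ^ 2)
  have hs : 0 < s := by positivity
  have hs2 : s ^ 2 = 1 + q ^ 2 := sq_sqrt (by positivity)
  have h_one_sub : 1 - (q / s) ^ 2 = (1 / s) ^ 2 := by
    field_simp
    linarith
  refine ⟨q / s, ?_, ?_⟩
  · rw [← sq_lt_one_iff_abs_lt_one]
    have : 0 < (1 / s) ^ 2 := by positivity
    linarith
  · rw [h_one_sub, sqrt_sq (by positivity)]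
    field_simp

theorem exists_standardized_interval {α β : ℝ} (hα : 0 < α) (hβ : 0 < β) :
    ∃ b c : ℝ, b < c ∧ (α * c + β * b) / (α + β) = 0 ∧
      α * β * (c - b) ^ 2 / ((α + β) ^ 2 * (α + β + 1)) = 1 := by
  -- The mean forces `b : c = -α : β`; the variance then fixes the scale `σ`.
  set σ := √((α + β + 1) / (α * β))
  have hσ2 : σ ^ 2 = (α + β + 1) / (α * β) := sq_sqrt (by positivity)
  have hσ : 0 < σ := by positivity
  refine ⟨-α * σ, β * σ, by nlinarith, by ring, ?_⟩
  rw [show β * σ - -α * σ = (α + β) * σ by ring, mul_pow, hσ2]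
  field_simp

theorem skewness_of_add_eq_one {α β : ℝ} (h : α + β = 1) :
    2 * (β - α) * √(α + β + 1) / ((α + β + 2) * √(α * β)) =
      4 * √2 / 3 * ((β - α) / √(1 - (β - α) ^ 2)) := by
  have h_prod : α * β = (1 - (β - α) ^ 2) / 2 ^ 2 := by
    linear_combination (α + β + 1) / 4 * h
  rw [h_prod, sqrt_div' _ (by norm_num : (0 : ℝ) ≤ 2 ^ 2), sqrt_sq (by norm_num), h]
  norm_num
  ring

theorem stmt_19 (p : ℝ) :
    ∃ (α β b c : ℝ), 0 < α ∧ 0 < β ∧ b < c ∧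
      (α * c + β * b) / (α + β) = 0 ∧
      α * β * (c - b) ^ 2 / ((α + β) ^ 2 * (α + β + 1)) = 1 ∧
      2 * (β - α) * Real.sqrt (α + β + 1) / ((α + β + 2) * Real.sqrt (α * β)) = p := by
  obtain ⟨t, ht, ht_eq⟩ := exists_abs_lt_one_div_sqrt_one_sub_sq_eq (3 * p / (4 * √2))
  have hα : 0 < (1 - t) / 2 := by linarith [le_abs_self t]
  have hβ : 0 < (1 + t) / 2 := by linarith [neg_abs_le t]
  obtain ⟨b, c, hbc, h_mean, h_var⟩ := exists_standardized_interval hα hβ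
  refine ⟨_, _, b, c, hα, hβ, hbc, h_mean, h_var, ?_⟩
  rw [skewness_of_add_eq_one (by ring), show (1 + t) / 2 - (1 - t) / 2 = t by ring, ht_eq]
  field_simp
end
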